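/- Under the hypotheses of the preceding perturbation result (A₀ stable with Σ₀ = A₀Σ₀A₀ᵀ + I, ‖Σ₀^{1/2}(A₀ − A₁)ᵀ‖₂ ≤ η c₀, c₀ ≥ ‖Σ₀^{1/2}A₀ᵀ‖₂, c₀²η(η+2) < 1), the steady-state covariance Σ₁ of A₁, defined by Σ₁ = A₁ Σ₁ A₁ᵀ + I, satisfies Σ₁ ⪯ (1 − c₀² η(η+2))^{-1} Σ₀. -/

import Mathlib

/-!
Write `Σ₀ = R²` with `R = Σ₀^{1/2}`. Then `A Σ₀ Aᵀ = (R Aᵀ)ᵀ (R Aᵀ)`, and splitting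
`R A₁ᵀ = R A₀ᵀ - R (A₀ - A₁)ᵀ` together with `(R A₀ᵀ)ᵀ (R A₀ᵀ) = Σ₀ - I` gives the Lyapunov
inequality `A₁ Σ₀ A₁ᵀ + (1 - ε) I ⪯ Σ₀`, `ε = c₀²η(η+2)`. Telescoping it along powers of `A₁`
shows `∑ₖ A₁ᵏ (A₁ᵏ)ᵀ ⪯ Σ₀ / (1 - ε)`, so `A₁ᵏ → 0`. Finally `D = Σ₀ / (1 - ε) - Σ₁` satisfies
`A₁ D A₁ᵀ ⪯ D`, hence `D ⪰ A₁ᵏ D (A₁ᵏ)ᵀ → 0`.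
-/

open Matrix

/-- The spectral norm of a square real matrix, i.e. the operator norm of the induced
linear map on Euclidean space. -/
noncomputable def sNorm {n : ℕ} (A : Matrix (Fin n) (Fin n) ℝ) : ℝ :=
  ‖Matrix.toEuclideanCLM (𝕜 := ℝ) A‖

/-- The positive semidefinite square root of a positive semidefinite matrix (the definition
removed from Mathlib, restated verbatim). -/
noncomputable def Matrix.PosSemidef.sqrt {n : Type*} [Fintype n] [DecidableEq n] {𝕜 : Type*}
    [RCLike 𝕜] [PartialOrder 𝕜] {A : Matrix n n 𝕜} (hA : A.PosSemidef) : Matrix n n 𝕜 :=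
  hA.1.eigenvectorUnitary.1 * diagonal ((↑) ∘ (√·) ∘ hA.1.eigenvalues) *
  (star hA.1.eigenvectorUnitary : Matrix n n 𝕜)

open Filter Topology Finset WithLp
open scoped MatrixOrder

section StarOrderedRing

variable {A : Type*} [Ring A] [StarRing A] [PartialOrder A] [StarOrderedRing A]

theorem pow_mul_mul_star_pow_add_sum_le {a p q : A} (h : a * p * star a + q ≤ p) (k : ℕ) :
    a ^ k * p * star (a ^ k) + ∑ j ∈ range k, a ^ j * q * star (a ^ j) ≤ p := by
  induction k with
  | zero => simp
  | succ k ih =>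
    calc a ^ (k + 1) * p * star (a ^ (k + 1)) + ∑ j ∈ range (k + 1), a ^ j * q * star (a ^ j)
        = a ^ k * (a * p * star a + q) * star (a ^ k) +
            ∑ j ∈ range k, a ^ j * q * star (a ^ j) := by
          rw [sum_range_succ, pow_succ, star_mul]; noncomm_ring
      _ ≤ a ^ k * p * star (a ^ k) + ∑ j ∈ range k, a ^ j * q * star (a ^ j) := by
          gcongr ?_ + _
          exact star_right_conjugate_le_conjugate h _
      _ ≤ p := ih

theorem nonneg_of_mul_mul_star_le [TopologicalSpace A] [ContinuousMul A] [ContinuousStar A]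
    [OrderClosedTopology A] {a d : A} (ha : Tendsto (a ^ ·) atTop (𝓝 0))
    (h : a * d * star a ≤ d) : 0 ≤ d := by
  have hlim : Tendsto (fun k ↦ a ^ k * d * star (a ^ k)) atTop (𝓝 0) := by
    simpa using (ha.mul_const d).mul ha.star
  refine le_of_tendsto' hlim fun k ↦ ?_
  simpa using pow_mul_mul_star_pow_add_sum_le (p := d) (q := 0) (by simpa using h) k

end StarOrderedRing

section PosSemidefClosed

open scoped ComplexOrder

variable {𝕜 n : Type*} [RCLike 𝕜] [Fintype n]

theorem Matrix.isClosed_setOf_posSemidef : IsClosed {A : Matrix n n 𝕜 | A.PosSemidef} := by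
  simp only [posSemidef_iff_dotProduct_mulVec, Set.ofPred_and, Set.ofPred_forall]
  refine .inter (isClosed_eq (by fun_prop) continuous_id) (isClosed_iInter fun x ↦ ?_)
  exact isClosed_le continuous_const (by fun_prop)

instance Matrix.orderClosedTopology : OrderClosedTopology (Matrix n n 𝕜) where
  isClosed_le' := isClosed_le_of_isClosed_nonneg <| by
    simpa only [nonneg_iff_posSemidef] using Matrix.isClosed_setOf_posSemidef

end PosSemidefClosed

section RealMatrix

variable {n : Type*} [Fintype n]

theorem Matrix.mul_star_self_apply_self (b : Matrix n n ℝ) (i : n) :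
    (b * star b) i i = ∑ l, b i l ^ 2 := by
  simp [mul_apply, sq]

theorem Matrix.dotProduct_mulVec_star_mul_self (b : Matrix n n ℝ) (x : n → ℝ) :
    x ⬝ᵥ (star b * b) *ᵥ x = ‖toLp 2 (b *ᵥ x)‖ ^ 2 := by
  rw [← real_inner_self_eq_norm_sq, EuclideanSpace.inner_eq_star_dotProduct, ← mulVec_mulVec,
    dotProduct_mulVec, star_eq_conjTranspose, vecMul_conjTranspose]
  simp

variable [DecidableEq n]

theorem Matrix.PosSemidef.sqrt_mul_self {A : Matrix n n ℝ} (hA : A.PosSemidef) :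
    hA.sqrt * hA.sqrt = A := by
  have hsqrt : hA.sqrt = Unitary.conjStarAlgAut ℝ _ hA.1.eigenvectorUnitary
      (diagonal ((↑) ∘ (√·) ∘ hA.1.eigenvalues)) := rfl
  conv_rhs => rw [hA.1.spectral_theorem]
  rw [hsqrt, ← map_mul, diagonal_mul_diagonal]
  congr 2 with i
  simp [Real.mul_self_sqrt (hA.eigenvalues_nonneg i)]

theorem Matrix.PosSemidef.isHermitian_sqrt {𝕜 : Type*} [RCLike 𝕜] [PartialOrder 𝕜]
    {A : Matrix n n 𝕜} (hA : A.PosSemidef) : hA.sqrt.IsHermitian := by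
  simp [IsHermitian, PosSemidef.sqrt, conjTranspose_mul, Matrix.mul_assoc, diagonal_conjTranspose,
    Function.comp_def, star_eq_conjTranspose, Pi.star_def]

theorem Matrix.tendsto_pow_of_mul_mul_star_add_le {a p : Matrix n n ℝ} {c : ℝ}
    (hp : p.PosSemidef) (hc : 0 < c) (h : a * p * star a + c • 1 ≤ p) :
    Tendsto (a ^ ·) atTop (𝓝 0) := by
  have hsum (k : ℕ) : ∑ j ∈ range k, c • (a ^ j * star (a ^ j)) ≤ p := by
    have h0 : 0 ≤ a ^ k * p * star (a ^ k) := star_right_conjugate_nonneg hp.nonneg _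
    simpa [Matrix.mul_smul] using
      (le_add_of_nonneg_left h0).trans (pow_mul_mul_star_pow_add_sum_le h k)
  have hentry (i l : n) (k : ℕ) : ∑ j ∈ range k, (a ^ j) i l ^ 2 ≤ p i i / c := by
    have hdiag := (Matrix.le_iff.mp (hsum k)).diag_nonneg (i := i)
    simp only [sub_apply, Matrix.sum_apply, smul_apply, mul_star_self_apply_self, smul_eq_mul,
      ← Finset.mul_sum, sub_nonneg] at hdiag
    rw [le_div_iff₀' hc]
    refine le_trans ?_ hdiag
    gcongr with j
    exact single_le_sum (f := fun l ↦ (a ^ j) i l ^ 2) (fun _ _ ↦ sq_nonneg _) (mem_univ l)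
  refine tendsto_pi_nhds.2 fun i ↦ tendsto_pi_nhds.2 fun l ↦ ?_
  have hsq := (summable_of_sum_range_le (fun j ↦ sq_nonneg _) (hentry i l)).tendsto_atTop_zero
  refine (tendsto_zero_iff_abs_tendsto_zero _).2 ?_
  simpa [Function.comp_def, Real.sqrt_sq_eq_abs] using hsq.sqrt

theorem Matrix.le_inv_smul_of_mul_mul_star_add_le {a p s : Matrix n n ℝ} {c : ℝ}
    (hp : p.PosSemidef) (hc : 0 < c) (h : a * p * star a + c • 1 ≤ p)
    (hs : s = a * s * star a + 1) : s ≤ c⁻¹ • p := by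
  rw [← sub_nonneg]
  refine nonneg_of_mul_mul_star_le (tendsto_pow_of_mul_mul_star_add_le hp hc h) ?_
  have hp' : c⁻¹ • (a * p * star a) + 1 ≤ c⁻¹ • p := by
    rw [Matrix.le_iff]
    convert (Matrix.le_iff.mp h).smul (inv_nonneg.mpr hc.le) using 1
    rw [smul_sub, smul_add, smul_smul, inv_mul_cancel₀ hc.ne', one_smul]
  calc a * (c⁻¹ • p - s) * star a = c⁻¹ • (a * p * star a) + 1 - s := by
        rw [Matrix.mul_sub, Matrix.sub_mul, Matrix.mul_smul, Matrix.smul_mul,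
          eq_sub_of_add_eq hs.symm, sub_sub_eq_add_sub]
    _ ≤ c⁻¹ • p - s := sub_le_sub_right hp' s

section L2OpNorm

open scoped Matrix.Norms.L2Operator

theorem Matrix.star_sub_mul_sub_le {b e : Matrix n n ℝ} {β γ : ℝ} (hb : ‖b‖ ≤ β) (he : ‖e‖ ≤ γ) :
    star (b - e) * (b - e) ≤ star b * b + (2 * β * γ + γ ^ 2) • 1 := by
  rw [le_iff]
  refine .of_dotProduct_mulVec_nonneg ?_ fun x ↦ ?_
  · simp [IsHermitian, star_eq_conjTranspose]
  · have hx : x ⬝ᵥ x = ‖toLp 2 x‖ ^ 2 := by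
      simpa using dotProduct_mulVec_star_mul_self 1 x
    simp only [star_trivial, sub_mulVec, add_mulVec, dotProduct_sub, dotProduct_add,
      dotProduct_mulVec_star_mul_self, smul_mulVec, one_mulVec, dotProduct_smul, smul_eq_mul, hx,
      toLp_sub]
    have hbx : ‖toLp 2 (b *ᵥ x)‖ ≤ β * ‖toLp 2 x‖ :=
      (l2_opNorm_mulVec b (toLp 2 x)).trans (by gcongr)
    have hex : ‖toLp 2 (e *ᵥ x)‖ ≤ γ * ‖toLp 2 x‖ :=
      (l2_opNorm_mulVec e (toLp 2 x)).trans (by gcongr)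
    have hbex := norm_sub_le (toLp 2 (b *ᵥ x)) (toLp 2 (e *ᵥ x))
    have := mul_le_mul hbx hex (norm_nonneg _) ((norm_nonneg _).trans hbx)
    nlinarith [norm_nonneg (toLp 2 (b *ᵥ x)), norm_nonneg (toLp 2 (e *ᵥ x)),
      pow_le_pow_left₀ (norm_nonneg _) hbex 2, pow_le_pow_left₀ (norm_nonneg _) hex 2]

theorem Matrix.mul_mul_star_add_le_of_perturbation {a₀ a₁ s r : Matrix n n ℝ} {β γ : ℝ}
    (hr : star r = r) (hrr : r * r = s) (hs : s = a₀ * s * star a₀ + 1)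
    (hβ : ‖r * star a₀‖ ≤ β) (hγ : ‖r * star (a₀ - a₁)‖ ≤ γ) :
    a₁ * s * star a₁ + (1 - (2 * β * γ + γ ^ 2)) • 1 ≤ s := by
  have hconj (a : Matrix n n ℝ) : a * s * star a = star (r * star a) * (r * star a) := by
    simp only [star_mul, star_star, hr, ← hrr, Matrix.mul_assoc]
  have hsplit : r * star a₁ = r * star a₀ - r * star (a₀ - a₁) := by
    simp [star_sub, Matrix.mul_sub]
  calc a₁ * s * star a₁ + (1 - (2 * β * γ + γ ^ 2)) • 1
      ≤ a₀ * s * star a₀ + (2 * β * γ + γ ^ 2) • 1 + (1 - (2 * β * γ + γ ^ 2)) • 1 := by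
        rw [hconj a₁, hconj a₀, hsplit]
        gcongr ?_ + _
        exact star_sub_mul_sub_le hβ hγ
    _ = s := by rw [add_assoc, ← add_smul, add_sub_cancel, one_smul, ← hs]

end L2OpNorm

end RealMatrix

theorem stmt5_general {n : ℕ} (A₀ A₁ S₀ S₁ : Matrix (Fin n) (Fin n) ℝ)
    (hS₀psd : S₀.PosSemidef)
    (hS₀ : S₀ = A₀ * S₀ * A₀ᵀ + 1)
    (c₀ η : ℝ)
    (hc₀ : sNorm (hS₀psd.sqrt * A₀ᵀ) ≤ c₀)
    (hpert : sNorm (hS₀psd.sqrt * (A₀ - A₁)ᵀ) ≤ η * c₀)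
    (hsmall : c₀ ^ 2 * (η * (η + 2)) < 1)
    (hS₁ : S₁ = A₁ * S₁ * A₁ᵀ + 1) :
    ((1 - c₀ ^ 2 * (η * (η + 2)))⁻¹ • S₀ - S₁).PosSemidef := by
  have htr (M : Matrix (Fin n) (Fin n) ℝ) : Mᵀ = star M :=
    (conjTranspose_eq_transpose_of_trivial M).symm
  simp only [htr] at hS₀ hS₁ hc₀ hpert
  -- `sNorm` is definitionally the norm of `Matrix.Norms.L2Operator`.
  have hlyap := mul_mul_star_add_le_of_perturbation hS₀psd.isHermitian_sqrt
    hS₀psd.sqrt_mul_self hS₀ hc₀ hpert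
  have hε : 2 * c₀ * (η * c₀) + (η * c₀) ^ 2 = c₀ ^ 2 * (η * (η + 2)) := by ring
  rw [hε] at hlyap
  exact le_inv_smul_of_mul_mul_star_add_le hS₀psd (sub_pos.mpr hsmall) hlyap hS₁

/-- Under the perturbation hypotheses (`A₀` stable with `Σ₀ = A₀Σ₀A₀ᵀ + I`,
`‖Σ₀^{1/2}(A₀ − A₁)ᵀ‖₂ ≤ ηc₀`, `c₀ ≥ ‖Σ₀^{1/2}A₀ᵀ‖₂`, `c₀²η(η+2) < 1`), the
steady-state covariance `Σ₁ = A₁Σ₁A₁ᵀ + I` of `A₁` satisfies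
`Σ₁ ⪯ (1 − c₀²η(η+2))⁻¹ Σ₀`. -/
theorem stmt5 {n : ℕ} (A₀ A₁ S₀ S₁ : Matrix (Fin n) (Fin n) ℝ)
    (hstab : ∀ μ ∈ spectrum ℂ (A₀.map (algebraMap ℝ ℂ)), ‖μ‖ < 1)
    (hS₀psd : S₀.PosSemidef)
    (hS₀ : S₀ = A₀ * S₀ * A₀ᵀ + 1)
    (c₀ η : ℝ)
    (hc₀ : sNorm (hS₀psd.sqrt * A₀ᵀ) ≤ c₀)
    (hpert : sNorm (hS₀psd.sqrt * (A₀ - A₁)ᵀ) ≤ η * c₀)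
    (hsmall : c₀ ^ 2 * (η * (η + 2)) < 1)
    (hS₁ : S₁ = A₁ * S₁ * A₁ᵀ + 1) :
    ((1 - c₀ ^ 2 * (η * (η + 2)))⁻¹ • S₀ - S₁).PosSemidef :=
  stmt5_general A₀ A₁ S₀ S₁ hS₀psd hS₀ c₀ η hc₀ hpert hsmall hS₁
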